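/- For every i ≥ 1 and every 1-Lipschitz function f : ℤ₊ → ℝ, the Stein solution satisfies |g_f(i)| ≤ g_{f₁}(i); that is, the supremum of |g_f(i)| over 1-Lipschitz f is attained at f₁ and equals g_{f₁}(i). -/

import Mathlib

/-!
Multiplying the Stein equation by `π n` and using detailed balance
`(β (n+1) + (n+1) n) π (n+1) = α π n`, the left-hand sides telescope to
`α π n g_f (n+1) = ∑_{k ≤ n} (f k - π(f)) π k`. Since `π` is a probability, this partial sum equals
`∑_{j > n} π j ∑_{k ≤ n} (f k - f j) π k`, and for `k < j` the Lipschitz bound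
`|f k - f j| ≤ j - k = f₁ k - f₁ j` is an equality for `f₁`.
-/

open Finset

/-- The death rate of `PBD(α;0,β,1)`: the coefficient of `g n` in the Stein equation. -/
def pbdDeathRate (β : ℝ) (n : ℕ) : ℝ := β * n + n * (n - 1)

theorem pbdDeathRate_succ (β : ℝ) (n : ℕ) :
    pbdDeathRate β (n + 1) = β * ((n : ℝ) + 1) + ((n : ℝ) + 1) * n := by
  simp only [pbdDeathRate]; push_cast; ring

theorem pbdDeathRate_succ_pos {β : ℝ} (hβ : 0 < β) (n : ℕ) : 0 < pbdDeathRate β (n + 1) := by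
  rw [pbdDeathRate_succ]; positivity

theorem pbd_pos {α β C : ℝ} {π : ℕ → ℝ} (hα : 0 < α) (hβ : 0 < β) (hC : 0 < C)
    (hπ : ∀ n : ℕ, π n =
      C * α ^ n / ∏ i ∈ range n, (β * ((i : ℝ) + 1) + ((i : ℝ) + 1) * (i : ℝ)))
    (n : ℕ) : 0 < π n := by
  rw [hπ n]
  refine div_pos (by positivity) (prod_pos fun i _ => ?_)
  rw [← pbdDeathRate_succ]
  exact pbdDeathRate_succ_pos hβ i

theorem pbd_detailed_balance {α β C : ℝ} {π : ℕ → ℝ} (hβ : 0 < β)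
    (hπ : ∀ n : ℕ, π n =
      C * α ^ n / ∏ i ∈ range n, (β * ((i : ℝ) + 1) + ((i : ℝ) + 1) * (i : ℝ)))
    (n : ℕ) : pbdDeathRate β (n + 1) * π (n + 1) = α * π n := by
  have hd := (pbdDeathRate_succ_pos hβ n).ne'
  rw [hπ n, hπ (n + 1), prod_range_succ, ← pbdDeathRate_succ]
  field_simp
  ring

theorem summable_natCast_mul_of_detailed_balance {α β : ℝ} {π : ℕ → ℝ} (hβ : 0 ≤ β)
    (hπ : ∀ n, 0 ≤ π n) (hbal : ∀ n, pbdDeathRate β (n + 1) * π (n + 1) = α * π n) :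
    Summable fun n : ℕ => (n : ℝ) * π n := by
  refine summable_of_ratio_norm_eventually_le (r := 1 / 2) (by norm_num) ?_
  filter_upwards [Filter.eventually_ge_atTop 1, Filter.eventually_ge_atTop ⌈2 * α⌉₊] with n hn1 hnα
  have hn1 : (1 : ℝ) ≤ n := by exact_mod_cast hn1
  have hnα : 2 * α ≤ n := (Nat.le_ceil _).trans (by exact_mod_cast hnα)
  have hb := hbal n
  rw [pbdDeathRate_succ] at hb
  have hπn := hπ n
  have hπn1 := hπ (n + 1)
  rw [Real.norm_eq_abs, Real.norm_eq_abs, abs_of_nonneg (by positivity),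
    abs_of_nonneg (by positivity)]
  push_cast
  -- `n (n+1) π (n+1) ≤ α π n ≤ n² π n / 2`, then divide by `n`
  nlinarith [mul_nonneg hβ hπn1, mul_le_mul_of_nonneg_right hnα hπn,
    mul_le_mul_of_nonneg_right hn1 (mul_nonneg hπn (by positivity : (0 : ℝ) ≤ n))]

theorem stein_solution_mul_eq_partial_sum {α : ℝ} {d π u G : ℕ → ℝ} (hd : d 0 = 0)
    (hbal : ∀ n, d (n + 1) * π (n + 1) = α * π n)
    (hu : ∀ n, α * u (n + 1) - d n * u n = G n) (n : ℕ) :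
    α * π n * u (n + 1) = ∑ k ∈ range (n + 1), G k * π k := by
  induction n with
  | zero =>
    have h0 := hu 0
    rw [hd, zero_mul, sub_zero] at h0
    rw [sum_range_one, ← h0]
    ring
  | succ n ih =>
    rw [sum_range_succ, ← ih]
    linear_combination π (n + 1) * hu (n + 1) + u (n + 1) * hbal n

theorem hasSum_mul_sum_sub_of_hasSum_one {π F : ℕ → ℝ} (hπ : HasSum π 1)
    (hF : Summable fun j => F j * π j) (m : ℕ) :
    HasSum (fun j => π (j + m) * ∑ k ∈ range m, (F k - F (j + m)) * π k)
      (∑ k ∈ range m, (F k - ∑' j, F j * π j) * π k) := by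
  have htail := (hasSum_nat_add_iff' m).2 hπ
  have hFtail := (hasSum_nat_add_iff' m).2 hF.hasSum
  have hsum : ∀ c, ∑ k ∈ range m, (F k - c) * π k
      = ∑ k ∈ range m, F k * π k - c * ∑ k ∈ range m, π k := fun c => by
    simp only [sub_mul, sum_sub_distrib, mul_sum]
  have hterm : (fun j => π (j + m) * ∑ k ∈ range m, (F k - F (j + m)) * π k) = fun j =>
      (∑ k ∈ range m, F k * π k) * π (j + m) - (∑ k ∈ range m, π k) * (F (j + m) * π (j + m)) := by
    ext j
    rw [hsum]
    ring
  rw [hterm, hsum, show ∀ A P S : ℝ, A - S * P = A * (1 - P) - P * (S - A) by intros; ring]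
  exact (htail.mul_left _).sub (hFtail.mul_left _)

theorem abs_sum_sub_le_of_lipschitz {f w : ℕ → ℝ} (hf : ∀ x y : ℕ, |f x - f y| ≤ |(x : ℝ) - y|)
    (hw : ∀ k, 0 ≤ w k) (j m : ℕ) :
    |∑ k ∈ range m, (f k - f (j + m)) * w k|
      ≤ ∑ k ∈ range m, (-(k : ℝ) - -((j + m : ℕ) : ℝ)) * w k := by
  refine (abs_sum_le_sum_abs _ _).trans (sum_le_sum fun k hk => ?_)
  have hkj : (k : ℝ) ≤ (j + m : ℕ) := by
    have := mem_range.1 hk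
    exact_mod_cast (by omega : k ≤ j + m)
  rw [abs_mul, abs_of_nonneg (hw k)]
  refine mul_le_mul_of_nonneg_right ?_ (hw k)
  calc |f k - f (j + m)| ≤ |(k : ℝ) - (j + m : ℕ)| := hf _ _
    _ = _ := by rw [abs_of_nonpos (by linarith)]; ring

theorem stmt_8_general
    (α β : ℝ) (hα : 0 < α) (hβ : 0 < β)
    (C : ℝ) (hC : 0 < C) (π : ℕ → ℝ)
    (hπ : ∀ n : ℕ, π n =
      C * α ^ n / ∏ i ∈ Finset.range n, (β * ((i : ℝ) + 1) + ((i : ℝ) + 1) * (i : ℝ)))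
    (hπ1 : ∑' n, π n = 1)
    (f : ℕ → ℝ) (hf : ∀ x y : ℕ, |f x - f y| ≤ |(x : ℝ) - (y : ℝ)|)
    (hfs : Summable fun n => |f n| * π n)
    (g : ℕ → ℝ)
    (hg : ∀ n : ℕ, α * g (n + 1) - (β * (n : ℝ) + (n : ℝ) * ((n : ℝ) - 1)) * g n
      = f n - ∑' k, f k * π k)
    (g₁ : ℕ → ℝ)
    (hg₁ : ∀ n : ℕ, α * g₁ (n + 1) - (β * (n : ℝ) + (n : ℝ) * ((n : ℝ) - 1)) * g₁ n
      = -(n : ℝ) - ∑' k : ℕ, -(k : ℝ) * π k)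
    :
    ∀ i : ℕ, 1 ≤ i → |g i| ≤ g₁ i := by
  have hpos := pbd_pos hα hβ hC hπ
  have hbal := pbd_detailed_balance hβ hπ
  have hd0 : pbdDeathRate β 0 = 0 := by simp [pbdDeathRate]
  have hπsum : HasSum π 1 := by
    by_cases h : Summable π
    · exact hπ1 ▸ h.hasSum
    · simp [tsum_eq_zero_of_not_summable h] at hπ1
  have hfπ : Summable fun n => f n * π n :=
    hfs.of_norm_bounded fun n => by rw [Real.norm_eq_abs, abs_mul, abs_of_pos (hpos n)]
  have hkπ : Summable fun n : ℕ => -(n : ℝ) * π n := by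
    simpa only [neg_mul] using
      (summable_natCast_mul_of_detailed_balance hβ.le (fun n => (hpos n).le) hbal).neg
  intro i hi
  obtain ⟨n, rfl⟩ := Nat.exists_eq_add_of_le' hi
  have hαπ : 0 < α * π n := mul_pos hα (hpos n)
  have key : |α * π n * g (n + 1)| ≤ α * π n * g₁ (n + 1) := by
    rw [stein_solution_mul_eq_partial_sum hd0 hbal hg,
      stein_solution_mul_eq_partial_sum hd0 hbal hg₁,
      ← (hasSum_mul_sum_sub_of_hasSum_one hπsum hfπ (n + 1)).tsum_eq, ← Real.norm_eq_abs]
    refine tsum_of_norm_bounded (hasSum_mul_sum_sub_of_hasSum_one hπsum hkπ (n + 1)) fun j => ?_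
    rw [Real.norm_eq_abs, abs_mul, abs_of_pos (hpos _)]
    exact mul_le_mul_of_nonneg_left (abs_sum_sub_le_of_lipschitz hf (fun k => (hpos k).le) j _)
      (hpos _).le
  rwa [abs_mul, abs_of_pos hαπ, mul_le_mul_iff_of_pos_left hαπ] at key

/-- for `i ≥ 1`, the supremum over 1-Lipschitz `f` of `|g_f i|` is attained at `f₁ k = -k`: `|g_f i| ≤ g_{f₁} i`. -/
theorem stmt_8
    (α β : ℝ) (hα : 0 < α) (hβ : 0 < β)
    (C : ℝ) (hC : 0 < C) (π : ℕ → ℝ)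
    (hπ : ∀ n : ℕ, π n =
      C * α ^ n / ∏ i ∈ Finset.range n, (β * ((i : ℝ) + 1) + ((i : ℝ) + 1) * (i : ℝ)))
    (hπ1 : ∑' n, π n = 1)
    (f : ℕ → ℝ) (hf : ∀ x y : ℕ, |f x - f y| ≤ |(x : ℝ) - (y : ℝ)|)
    (hfs : Summable fun n => |f n| * π n)
    (g : ℕ → ℝ) (hg0 : g 0 = g 1)
    (hg : ∀ n : ℕ, α * g (n + 1) - (β * (n : ℝ) + (n : ℝ) * ((n : ℝ) - 1)) * g n
      = f n - ∑' k, f k * π k)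
    (g₁ : ℕ → ℝ) (hg₁0 : g₁ 0 = g₁ 1)
    (hg₁ : ∀ n : ℕ, α * g₁ (n + 1) - (β * (n : ℝ) + (n : ℝ) * ((n : ℝ) - 1)) * g₁ n
      = -(n : ℝ) - ∑' k : ℕ, -(k : ℝ) * π k)
    :
    ∀ i : ℕ, 1 ≤ i → |g i| ≤ g₁ i :=
  stmt_8_general α β hα hβ C hC π hπ hπ1 f hf hfs g hg g₁ hg₁
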